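/- arXiv:1901.00964 — 4 statements merged into one kernel-verified Lean document; each statement's English description precedes it below -/
import Mathlib

section
/- For a prime power q and natural numbers n and k with k ≤ n, the number of k-dimensional linear subspaces of 𝔽_q^n equals ∏_{j=0}^{k-1} (q^n − q^j)/(q^k − q^j); equivalently, the cardinality of {W : Submodule 𝔽_q 𝔽_q^n | dim W = k} times ∏_{j=0}^{k-1} (q^k − q^j) equals ∏_{j=0}^{k-1} (q^n − q^j). -/
open Submodule

/-- For a prime power `q` and naturals `k ≤ n`, the number of `k`-dimensional
linear subspaces of `𝔽_q^n`, multiplied by `∏_{j=0}^{k-1} (q^k − q^j)`, equals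
`∏_{j=0}^{k-1} (q^n − q^j)` (i.e. the count is the `q`-binomial coefficient). -/
theorem num_k_dim_subspaces (q n k : ℕ) (hq : IsPrimePow q) (hk : k ≤ n)
    (F : Type) [Field F] [Fintype F] (hF : Fintype.card F = q) :
    Nat.card {W : Submodule F (Fin n → F) // Module.finrank F W = k} *
        ∏ j ∈ Finset.range k, (q ^ k - q ^ j) =
      ∏ j ∈ Finset.range k, (q ^ n - q ^ j) := by
  classical
  subst hF
  set V := Fin n → F with hVdef
  have hV : Module.finrank F V = n := by
    show Module.finrank F (Fin n → F) = n
    simp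
  -- total number of linearly independent k-tuples in V
  have htotal : Nat.card {s : Fin k → V // LinearIndependent F s} =
      ∏ j ∈ Finset.range k, (Fintype.card F ^ n - Fintype.card F ^ j) := by
    rw [card_linearIndependent (by rw [hV]; exact hk), hV,
      ← Fin.prod_univ_eq_prod_range]
  -- the fibration by span
  let φ : {s : Fin k → V // LinearIndependent F s} →
      {W : Submodule F V // Module.finrank F W = k} :=
    fun s => ⟨span F (Set.range s.1), by
      rw [finrank_span_eq_card s.2, Fintype.card_fin]⟩
  have hfiber : ∀ W : {W : Submodule F V // Module.finrank F W = k},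
      Nat.card {s // φ s = W} =
        ∏ j ∈ Finset.range k, (Fintype.card F ^ k - Fintype.card F ^ j) := by
    intro W
    have e : {s // φ s = W} ≃ {t : Fin k → W.1 // LinearIndependent F t} :=
      { toFun := fun p => ⟨fun i => ⟨p.1.1 i, by
          have hs : span F (Set.range p.1.1) = W.1 := congrArg Subtype.val p.2
          rw [← hs]; exact subset_span (Set.mem_range_self i)⟩, by
          exact p.1.2.of_comp W.1.subtype⟩
        invFun := fun t => ⟨⟨fun i => (t.1 i : V),
            (t.2.map' W.1.subtype (Submodule.ker_subtype _))⟩, by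
          apply Subtype.ext
          show span F (Set.range fun i => ((t.1 i : V))) = W.1
          have h1 : (Set.range fun i => ((t.1 i : V))) =
              W.1.subtype '' Set.range t.1 := by
            rw [← Set.range_comp]; rfl
          have h2 : span F (Set.range t.1) = (⊤ : Submodule F W.1) := by
            apply Submodule.eq_top_of_finrank_eq
            rw [finrank_span_eq_card t.2, Fintype.card_fin, W.2]
          rw [h1, ← Submodule.map_span, h2, Submodule.map_subtype_top]⟩
        left_inv := fun p => rfl
        right_inv := fun t => rfl }
    rw [Nat.card_congr e,
      card_linearIndependent (k := k) (by rw [W.2])]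
    rw [W.2, ← Fin.prod_univ_eq_prod_range]
  have hsum : Nat.card {s : Fin k → V // LinearIndependent F s} =
      Nat.card {W : Submodule F V // Module.finrank F W = k} *
        ∏ j ∈ Finset.range k, (Fintype.card F ^ k - Fintype.card F ^ j) := by
    have : Fintype {W : Submodule F V // Module.finrank F W = k} := Fintype.ofFinite _
    rw [Nat.card_congr (Equiv.sigmaFiberEquiv φ).symm, Nat.card_eq_fintype_card,
      Fintype.card_sigma]
    simp only [← Nat.card_eq_fintype_card, hfiber]
    rw [Finset.sum_const, Finset.card_univ, smul_eq_mul, ← Nat.card_eq_fintype_card]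
  rw [← hsum, htotal]
end

section
/- For a prime power q and natural numbers m, n, r with r ≤ min(m, n), the number of m×n matrices over 𝔽_q whose rank equals r is ∏_{j=0}^{r-1} (q^m − q^j)(q^n − q^j)/(q^r − q^j); equivalently, the cardinality of {A : Matrix (Fin m) (Fin n) 𝔽_q | rank A = r} times ∏_{j=0}^{r-1} (q^r − q^j) equals ∏_{j=0}^{r-1} (q^m − q^j)(q^n − q^j). -/
/-!
A matrix `A` of rank `r` factors as `A = B * C` with `B` an `m × r` and `C` an `r × n` matrix, both
of rank `r`, and two such factorisations differ by a unique `u ∈ GL_r(𝔽_q)`: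
`(B, C) ↦ (B * u, u⁻¹ * C)`. Hence the pairs `(B, C)` number `#{A : rank A = r} · |GL_r(𝔽_q)|`.
An `r × n` matrix of rank `r` is a family of `r` linearly independent rows in `𝔽_q^n`, of which
there are `∏_{j<r} (q^n − q^j)`; transposing counts the `B`s, and
`|GL_r(𝔽_q)| = ∏_{j<r} (q^r − q^j)`.
-/

open Matrix

theorem Nat.card_eq_mul_of_forall_card_fiber_eq {α β : Type*} [Finite α] [Finite β] (f : α → β)
    {k : ℕ} (h : ∀ b, Nat.card {a // f a = b} = k) : Nat.card α = Nat.card β * k := by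
  have := Fintype.ofFinite β
  rw [← Nat.card_congr (Equiv.sigmaFiberEquiv f), Nat.card_sigma,
    Finset.sum_congr rfl fun b _ => h b, Finset.sum_const, Finset.card_univ, smul_eq_mul,
    Nat.card_eq_fintype_card]

namespace Matrix

variable {K : Type*} [Field K] {m n ι : Type*} [Fintype n] [Fintype ι]

theorem exists_mul_eq_one_of_rank_eq_card_height [DecidableEq ι] {C : Matrix ι n K}
    (hC : C.rank = Fintype.card ι) : ∃ R : Matrix n ι K, C * R = 1 := by
  have hsurj : LinearMap.range C.mulVecLin = ⊤ :=
    Submodule.eq_top_of_finrank_eq (by rw [← rank, hC, Module.finrank_fintype_fun_eq_card])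
  classical
  obtain ⟨g, hg⟩ := C.mulVecLin.exists_rightInverse_of_surjective hsurj
  refine ⟨LinearMap.toMatrix' g, toLin'.injective ?_⟩
  rw [toLin'_mul, toLin'_toMatrix', toLin'_one]
  exact hg

theorem exists_mul_eq_one_of_rank_eq_card_width [Fintype m] [DecidableEq ι] {B : Matrix m ι K}
    (hB : B.rank = Fintype.card ι) : ∃ L : Matrix ι m K, L * B = 1 := by
  obtain ⟨R, hR⟩ := exists_mul_eq_one_of_rank_eq_card_height (C := Bᵀ) (by rwa [rank_transpose])
  exact ⟨Rᵀ, by simpa [transpose_mul] using congrArg transpose hR⟩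

theorem rank_mul_of_rank_eq_card [Fintype m] {B : Matrix m ι K} {C : Matrix ι n K}
    (hB : B.rank = Fintype.card ι) (hC : C.rank = Fintype.card ι) :
    (B * C).rank = Fintype.card ι := by
  classical
  obtain ⟨L, hL⟩ := exists_mul_eq_one_of_rank_eq_card_width hB
  obtain ⟨R, hR⟩ := exists_mul_eq_one_of_rank_eq_card_height hC
  refine le_antisymm ((rank_mul_le_left B C).trans (rank_le_card_width B)) ?_
  calc Fintype.card ι = (L * (B * C) * R).rank := by
        rw [← Matrix.mul_assoc L, hL, Matrix.one_mul, hR, rank_one]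
    _ ≤ (B * C).rank := (rank_mul_le_left _ _).trans (rank_mul_le_right _ _)

theorem rank_eq_card_of_mul_eq {A : Matrix m n K} {B : Matrix m ι K} {C : Matrix ι n K}
    (hA : A.rank = Fintype.card ι) (h : B * C = A) :
    B.rank = Fintype.card ι ∧ C.rank = Fintype.card ι :=
  ⟨le_antisymm (rank_le_card_width B) (hA ▸ h ▸ rank_mul_le_left B C),
    le_antisymm (rank_le_card_height C) (hA ▸ h ▸ rank_mul_le_right B C)⟩

theorem exists_mul_eq_of_rank_eq_card [Fintype m] {A : Matrix m n K}
    (hA : A.rank = Fintype.card ι) : ∃ (B : Matrix m ι K) (C : Matrix ι n K), B * C = A := by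
  classical
  obtain ⟨e⟩ : Nonempty (LinearMap.range A.mulVecLin ≃ₗ[K] (ι → K)) :=
    FiniteDimensional.nonempty_linearEquiv_of_finrank_eq
      (by rw [← rank, hA, Module.finrank_fintype_fun_eq_card])
  refine ⟨LinearMap.toMatrix' ((LinearMap.range A.mulVecLin).subtype ∘ₗ e.symm.toLinearMap),
    LinearMap.toMatrix' (e.toLinearMap ∘ₗ A.mulVecLin.rangeRestrict), ?_⟩
  rw [← LinearMap.toMatrix'_comp]
  convert LinearMap.toMatrix'_toLin' A
  ext x
  simp

section Factorizations

variable [Fintype m] [DecidableEq ι] {A : Matrix m n K} {B₀ B : Matrix m ι K}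
  {C₀ C : Matrix ι n K} {L : Matrix ι m K} {R : Matrix n ι K}

theorem mul_mul_mul_eq_one_of_mul_eq (hA : B₀ * C₀ = A) (hL : L * B₀ = 1) (hR : C₀ * R = 1)
    (h : B * C = A) : L * B * (C * R) = 1 :=
  calc L * B * (C * R) = L * B₀ * (C₀ * R) := by
        simp only [Matrix.mul_assoc, ← Matrix.mul_assoc B, h, ← hA]
    _ = 1 := by rw [hL, hR, Matrix.one_mul]

/-- If `A = B₀ * C₀` with `L * B₀ = 1` and `C₀ * R = 1`, every factorisation `A = B * C` through
`ι` is `(B₀ * u, u⁻¹ * C₀)` for a unique `u`, namely `u = L * B` with inverse `C * R`. -/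
def factorizationsEquivGL (hA : B₀ * C₀ = A) (hL : L * B₀ = 1) (hR : C₀ * R = 1) :
    {p : Matrix m ι K × Matrix ι n K // p.1 * p.2 = A} ≃ GL ι K where
  toFun p := ⟨L * p.1.1, p.1.2 * R, mul_mul_mul_eq_one_of_mul_eq hA hL hR p.2,
    mul_eq_one_comm.mp (mul_mul_mul_eq_one_of_mul_eq hA hL hR p.2)⟩
  invFun u := ⟨(B₀ * u.1, u.2 * C₀), by
    rw [Matrix.mul_assoc, ← Matrix.mul_assoc u.1, u.val_inv, Matrix.one_mul, hA]⟩
  left_inv := by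
    rintro ⟨⟨B, C⟩, h : B * C = A⟩
    have hu := mul_eq_one_comm.mp (mul_mul_mul_eq_one_of_mul_eq hA hL hR h)
    have hB : B * (C * R) = B₀ := by
      rw [← Matrix.mul_assoc, h, ← hA, Matrix.mul_assoc, hR, Matrix.mul_one]
    have hC : L * B * C = C₀ := by
      rw [Matrix.mul_assoc, h, ← hA, ← Matrix.mul_assoc, hL, Matrix.one_mul]
    ext : 2
    · change B₀ * (L * B) = B
      rw [← hB, Matrix.mul_assoc, hu, Matrix.mul_one]
    · change C * R * C₀ = C
      rw [← hC, ← Matrix.mul_assoc, hu, Matrix.one_mul]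
  right_inv u := Units.ext <| by
    change L * (B₀ * u.1) = u.1
    rw [← Matrix.mul_assoc, hL, Matrix.one_mul]

end Factorizations

def mulFullRank [Fintype m]
    (p : {B : Matrix m ι K // B.rank = Fintype.card ι} ×
      {C : Matrix ι n K // C.rank = Fintype.card ι}) :
    {A : Matrix m n K // A.rank = Fintype.card ι} :=
  ⟨p.1.1 * p.2.1, rank_mul_of_rank_eq_card p.1.2 p.2.2⟩

theorem card_fiber_mulFullRank [Fintype m] [DecidableEq ι]
    (A : {A : Matrix m n K // A.rank = Fintype.card ι}) :
    Nat.card {p // mulFullRank p = A} = Nat.card (GL ι K) := by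
  obtain ⟨B₀, C₀, hA⟩ := exists_mul_eq_of_rank_eq_card A.2
  obtain ⟨hB₀, hC₀⟩ := rank_eq_card_of_mul_eq A.2 hA
  obtain ⟨L, hL⟩ := exists_mul_eq_one_of_rank_eq_card_width hB₀
  obtain ⟨R, hR⟩ := exists_mul_eq_one_of_rank_eq_card_height hC₀
  have fiberEquiv :
      {p // mulFullRank p = A} ≃ {p : Matrix m ι K × Matrix ι n K // p.1 * p.2 = A} :=
    { toFun p := ⟨(p.1.1, p.1.2), congrArg Subtype.val p.2⟩
      invFun p := ⟨(⟨p.1.1, (rank_eq_card_of_mul_eq A.2 p.2).1⟩,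
        ⟨p.1.2, (rank_eq_card_of_mul_eq A.2 p.2).2⟩), Subtype.ext p.2⟩
      left_inv _ := rfl
      right_inv _ := rfl }
  exact Nat.card_congr (fiberEquiv.trans (factorizationsEquivGL hA hL hR))

theorem card_fullRank_mul_card_fullRank_eq_card_mul_card_GL [Fintype m] [DecidableEq ι]
    [Finite K] :
    Nat.card {B : Matrix m ι K // B.rank = Fintype.card ι} *
        Nat.card {C : Matrix ι n K // C.rank = Fintype.card ι} =
      Nat.card {A : Matrix m n K // A.rank = Fintype.card ι} * Nat.card (GL ι K) := by
  rw [← Nat.card_prod]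
  exact Nat.card_eq_mul_of_forall_card_fiber_eq mulFullRank card_fiber_mulFullRank

theorem rank_eq_card_height_iff_linearIndependent_row {C : Matrix ι n K} :
    C.rank = Fintype.card ι ↔ LinearIndependent K C.row :=
  ⟨fun h => linearIndependent_iff_card_eq_finrank_span.mpr
    (by rw [Set.finrank, ← rank_eq_finrank_span_row, h]), LinearIndependent.rank_matrix⟩

theorem card_rank_eq_height [Fintype K] {r : ℕ} (hr : r ≤ Fintype.card n) :
    Nat.card {C : Matrix (Fin r) n K // C.rank = r} =
      ∏ j ∈ Finset.range r, (Fintype.card K ^ Fintype.card n - Fintype.card K ^ j) := by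
  have e : {C : Matrix (Fin r) n K // C.rank = r} ≃
      {s : Fin r → n → K // LinearIndependent K s} :=
    Equiv.subtypeEquivRight fun C => by
      have := rank_eq_card_height_iff_linearIndependent_row (C := C)
      rwa [Fintype.card_fin] at this
  rw [Nat.card_congr e, ← Fin.prod_univ_eq_prod_range, card_linearIndependent,
    Module.finrank_fintype_fun_eq_card]
  rwa [Module.finrank_fintype_fun_eq_card]

theorem card_rank_eq_transpose [Fintype m] (k : ℕ) :
    Nat.card {A : Matrix m n K // A.rank = k} = Nat.card {A : Matrix n m K // A.rank = k} :=
  Nat.card_congr ((transposeAddEquiv m n K).toEquiv.subtypeEquiv fun A => by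
    rw [AddEquiv.toEquiv_eq_coe, AddEquiv.coe_toEquiv, transposeAddEquiv_apply, rank_transpose])

end Matrix

theorem num_rank_r_matrices_general (q m n r : ℕ) (hr : r ≤ min m n)
    (F : Type) [Field F] [Fintype F] (hF : Fintype.card F = q) :
    Nat.card {A : Matrix (Fin m) (Fin n) F // A.rank = r} *
        ∏ j ∈ Finset.range r, (q ^ r - q ^ j) =
      ∏ j ∈ Finset.range r, (q ^ m - q ^ j) * (q ^ n - q ^ j) := by
  subst hF
  obtain ⟨hrm, hrn⟩ := le_min_iff.mp hr
  have key := card_fullRank_mul_card_fullRank_eq_card_mul_card_GL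
    (K := F) (m := Fin m) (n := Fin n) (ι := Fin r)
  simp only [Fintype.card_fin] at key
  rw [card_rank_eq_transpose, card_rank_eq_height (by simpa using hrm),
    card_rank_eq_height (by simpa using hrn), card_GL_field,
    Fin.prod_univ_eq_prod_range (fun j => Fintype.card F ^ r - Fintype.card F ^ j)] at key
  simp only [Fintype.card_fin] at key
  rw [Finset.prod_mul_distrib, key]

/-- For a prime power `q` and naturals `m, n, r` with `r ≤ min(m, n)`, the number
of `m × n` matrices over `𝔽_q` of rank `r`, multiplied by `∏_{j=0}^{r-1} (q^r − q^j)`,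
equals `∏_{j=0}^{r-1} (q^m − q^j)(q^n − q^j)`. -/
theorem num_rank_r_matrices (q m n r : ℕ) (hq : IsPrimePow q) (hr : r ≤ min m n)
    (F : Type) [Field F] [Fintype F] (hF : Fintype.card F = q) :
    Nat.card {A : Matrix (Fin m) (Fin n) F // A.rank = r} *
        ∏ j ∈ Finset.range r, (q ^ r - q ^ j) =
      ∏ j ∈ Finset.range r, (q ^ m - q ^ j) * (q ^ n - q ^ j) :=
  num_rank_r_matrices_general q m n r hr F hF
end

section
/- Fix nonnegative integers n_0, n_1, …, n_j (j ≥ 1) and view each P^ℓ_k(r) = q^{−k·n_{ℓ+1}} ∏_{i=0}^{r-1} (q^{n_{ℓ+1}} − q^i)(q^k − q^i)/(q^r − q^i) as a function of the real variable q ≥ 2. Then there exists exactly one tuple (i_1^*, …, i_j^*) with 0 ≤ i_ℓ^* ≤ n_ℓ for all ℓ such that the product P^{j-1}_{i_{j-1}^*}(n_j − i_j^*) ⋯ P^1_{i_1^*}(n_2 − i_2^*) · P^0_{n_0}(n_1 − i_1^*) tends to 1 as q → ∞; moreover this tuple is given recursively by i_0^* = n_0 and i_ℓ^* = (n_ℓ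 − i_{ℓ-1}^*)_+ for ℓ = 1, …, j. For every other tuple in the index range, the corresponding product tends to 0. -/
open Filter

/-- `P^ℓ_k(r) = q^{−k·N} ∏_{i=0}^{r-1} (q^N − q^i)(q^k − q^i)/(q^r − q^i)` where
`N = n_{ℓ+1}`, viewed as a function of the real variable `q`, with the conventions that the
empty product is `1` and the value is `0` for impossible (negative-`r`) cases; the formula
itself vanishes when `r > min(k, N)`. -/
noncomputable def PR (q : ℝ) (N k : ℕ) (r : ℤ) : ℝ :=
  if 0 ≤ r then
    q ^ (-(k * N : ℤ)) *
      ∏ i ∈ Finset.range r.toNat,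
        ((q ^ N - q ^ i) * (q ^ k - q ^ i) / (q ^ r.toNat - q ^ i))
  else 0

/-- The recursion `i_0^* = n_0`, `i_ℓ^* = (n_ℓ − i_{ℓ-1}^*)_+` (truncated subtraction on `ℕ`
is exactly the positive part). -/
def istar (n : ℕ → ℕ) : ℕ → ℕ
  | 0 => n 0
  | ℓ + 1 => n (ℓ + 1) - istar n ℓ

/-- The product `P^{j-1}_{i_{j-1}}(n_j − i_j) ⋯ P^1_{i_1}(n_2 − i_2) · P^0_{i_0}(n_1 − i_1)`
as a function of the real variable `q`, for a tuple `(i_0, i_1, …, i_j)`. -/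
noncomputable def prodP (n : ℕ → ℕ) (j : ℕ) (i : Fin (j + 1) → ℕ) (q : ℝ) : ℝ :=
  ∏ ℓ : Fin j, PR q (n (ℓ.val + 1)) (i ℓ.castSucc) ((n (ℓ.val + 1) : ℤ) - (i ℓ.succ : ℤ))

/-!
Dividing each factor by `q^{N+k-r}` gives
`P_k(r) = q^{-(N-r)(k-r)} ∏_{i<r} (1 - q^{i-N})(1 - q^{i-k}) / (1 - q^{i-r})` for `r ≤ min(k, N)`,
where the product tends to `1`, while `P_k(r) = 0` for `r > k`. So `P_k(r)` tends to `1` if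
`r = min(k, N)` and to `0` otherwise. For `N = n_{ℓ+1}`, `k = i_ℓ`, `r = n_{ℓ+1} - i_{ℓ+1}` the
condition reads `i_{ℓ+1} = (n_{ℓ+1} - i_ℓ)_+`, the recursion defining `i^*`: the product of
these factors tends to `1` at `i^*` and to `0` at every other tuple.
-/

lemma PR_natCast (q : ℝ) (N k r : ℕ) :
    PR q N k r =
      q ^ (-(k * N : ℤ)) *
        ∏ i ∈ Finset.range r, ((q ^ N - q ^ i) * (q ^ k - q ^ i) / (q ^ r - q ^ i)) := by
  simp [PR]

lemma PR_natCast_of_lt (q : ℝ) (N : ℕ) {k r : ℕ} (h : k < r) : PR q N k r = 0 := by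
  rw [PR_natCast, Finset.prod_eq_zero (Finset.mem_range.mpr h), mul_zero]
  simp

lemma PR_natCast_eq_zpow_mul_prod {q : ℝ} (hq : 1 < q) {N k r : ℕ} (hrN : r ≤ N)
    (hrk : r ≤ k) :
    PR q N k r =
      q ^ (-(((N - r) * (k - r) : ℕ) : ℤ)) *
        ∏ i ∈ Finset.range r,
          ((1 - q ^ i / q ^ N) * (1 - q ^ i / q ^ k) / (1 - q ^ i / q ^ r)) := by
  have hq0 : q ≠ 0 := by positivity
  have hqN : q ^ N ≠ 0 := pow_ne_zero _ hq0
  have hqk : q ^ k ≠ 0 := pow_ne_zero _ hq0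
  have hqr : q ^ r ≠ 0 := pow_ne_zero _ hq0
  have hpow : q ^ (N + k - r) * q ^ r = q ^ N * q ^ k := by
    rw [← pow_add, ← pow_add]; congr 1; omega
  have hfactor : ∀ i ∈ Finset.range r,
      (q ^ N - q ^ i) * (q ^ k - q ^ i) / (q ^ r - q ^ i) =
        q ^ (N + k - r) *
          ((1 - q ^ i / q ^ N) * (1 - q ^ i / q ^ k) / (1 - q ^ i / q ^ r)) := by
    intro i hi
    have hir : q ^ r - q ^ i ≠ 0 :=
      sub_ne_zero.mpr (pow_lt_pow_right₀ hq (Finset.mem_range.mp hi)).ne'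
    rw [one_sub_div hqN, one_sub_div hqk, one_sub_div hqr, div_mul_div_comm, div_div_div_eq,
      mul_div_assoc', div_eq_div_iff hir (by positivity)]
    linear_combination (-((q ^ N - q ^ i) * (q ^ k - q ^ i) * (q ^ r - q ^ i))) * hpow
  rw [PR_natCast, Finset.prod_congr rfl hfactor, Finset.prod_mul_distrib, Finset.prod_const,
    Finset.card_range, ← mul_assoc, ← pow_mul, ← zpow_natCast q ((N + k - r) * r),
    ← zpow_add₀ hq0]
  congr 2
  push_cast [Nat.cast_sub hrN, Nat.cast_sub hrk, Nat.cast_sub (hrN.trans (Nat.le_add_right N k))]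
  ring

lemma tendsto_prod_one_sub_pow_div_pow {N k r : ℕ} (hrN : r ≤ N) (hrk : r ≤ k) :
    Tendsto (fun q : ℝ => ∏ i ∈ Finset.range r,
        ((1 - q ^ i / q ^ N) * (1 - q ^ i / q ^ k) / (1 - q ^ i / q ^ r))) atTop (nhds 1) := by
  have hone : ∀ {m i : ℕ}, i < m → Tendsto (fun q : ℝ => 1 - q ^ i / q ^ m) atTop (nhds 1) :=
    fun him => by simpa using (tendsto_pow_div_pow_atTop_zero him).const_sub (1 : ℝ)
  have hfactor : ∀ i ∈ Finset.range r, Tendsto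
      (fun q : ℝ => (1 - q ^ i / q ^ N) * (1 - q ^ i / q ^ k) / (1 - q ^ i / q ^ r)) atTop
      (nhds 1) := fun i hi => by
    have hir := Finset.mem_range.mp hi
    have h := ((hone (hir.trans_le hrN)).mul (hone (hir.trans_le hrk))).div (hone hir) one_ne_zero
    rw [mul_one, div_one] at h
    exact h
  simpa using tendsto_finsetProd _ hfactor

lemma tendsto_PR_natCast {N k r : ℕ} (hrN : r ≤ N) (hrk : r ≤ k) :
    Tendsto (fun q => PR q N k r) atTop (nhds (if r = min k N then 1 else 0)) := by
  have hzpow : Tendsto (fun q : ℝ => q ^ (-(((N - r) * (k - r) : ℕ) : ℤ))) atTop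
      (nhds (if r = min k N then 1 else 0)) := by
    split_ifs with hmin
    · have hexp : (N - r) * (k - r) = 0 := by
        rcases min_choice k N with h | h <;> simp [hmin, h]
      simp [hexp]
    · refine tendsto_zpow_atTop_zero ?_
      have : 0 < (N - r) * (k - r) := Nat.mul_pos (by omega) (by omega)
      omega
  have hprod := hzpow.mul (tendsto_prod_one_sub_pow_div_pow hrN hrk)
  rw [mul_one] at hprod
  refine hprod.congr' ?_
  filter_upwards [eventually_gt_atTop 1] with q hq
  exact (PR_natCast_eq_zpow_mul_prod hq hrN hrk).symm

lemma tendsto_PR_sub {N k m : ℕ} (hm : m ≤ N) :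
    Tendsto (fun q => PR q N k ((N : ℤ) - m)) atTop (nhds (if m = N - k then 1 else 0)) := by
  rw [← Nat.cast_sub hm]
  by_cases hk : N - m ≤ k
  · convert tendsto_PR_natCast (Nat.sub_le N m) hk using 3
    omega
  · simp only [PR_natCast_of_lt _ _ (not_le.mp hk)]
    rw [if_neg (by omega)]
    exact tendsto_const_nhds

lemma istar_le (n : ℕ → ℕ) : ∀ m, istar n m ≤ n m
  | 0 => le_rfl
  | _ + 1 => Nat.sub_le _ _

lemma forall_eq_istar_iff (n : ℕ → ℕ) {j : ℕ} {i : Fin (j + 1) → ℕ} (h0 : i 0 = n 0) :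
    (∀ ℓ : Fin (j + 1), i ℓ = istar n ℓ) ↔
      ∀ ℓ : Fin j, i ℓ.succ = n (ℓ + 1) - i ℓ.castSucc := by
  refine ⟨fun h ℓ => ?_, fun h ℓ => ?_⟩
  · rw [h, h]
    rfl
  · induction ℓ using Fin.induction with
    | zero => exact h0
    | succ ℓ ih => rw [h, ih]; rfl

lemma tendsto_prodP (n : ℕ → ℕ) {j : ℕ} {i : Fin (j + 1) → ℕ} (h0 : i 0 = n 0)
    (hle : ∀ ℓ : Fin (j + 1), i ℓ ≤ n ℓ) :
    Tendsto (prodP n j i) atTop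
      (nhds (if ∀ ℓ : Fin (j + 1), i ℓ = istar n ℓ then 1 else 0)) := by
  have h := tendsto_finsetProd Finset.univ fun (ℓ : Fin j) _ =>
    tendsto_PR_sub (k := i ℓ.castSucc) (hle ℓ.succ)
  rw [Fintype.prod_boole] at h
  convert h using 3
  · rfl
  · exact forall_eq_istar_iff n h0

theorem unique_tuple_tendsto_one_general (j : ℕ) (n : ℕ → ℕ) :
    (∃! i : Fin (j + 1) → ℕ,
      (i 0 = n 0 ∧ ∀ ℓ : Fin (j + 1), i ℓ ≤ n ℓ.val) ∧
        Tendsto (prodP n j i) atTop (nhds 1)) ∧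
    (∀ i : Fin (j + 1) → ℕ, i 0 = n 0 → (∀ ℓ : Fin (j + 1), i ℓ ≤ n ℓ.val) →
      ((∀ ℓ : Fin (j + 1), i ℓ = istar n ℓ.val) →
          Tendsto (prodP n j i) atTop (nhds 1)) ∧
      ((¬ ∀ ℓ : Fin (j + 1), i ℓ = istar n ℓ.val) →
          Tendsto (prodP n j i) atTop (nhds 0))) := by
  refine ⟨⟨fun ℓ => istar n ℓ, ⟨⟨rfl, fun ℓ => istar_le n ℓ⟩, ?_⟩, ?_⟩,
    fun i h0 hle => ⟨fun h => by simpa [h] using tendsto_prodP n h0 hle,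
      fun h => by simpa [h] using tendsto_prodP n h0 hle⟩⟩
  · simpa using tendsto_prodP n (i := fun ℓ => istar n ℓ) rfl fun ℓ => istar_le n ℓ
  · rintro i ⟨⟨h0, hle⟩, hone⟩
    have hlim := tendsto_prodP n h0 hle
    split_ifs at hlim with hstar
    · exact funext hstar
    · exact absurd (tendsto_nhds_unique hone hlim) one_ne_zero

/-- Proposition 4.1: there is exactly one tuple `(i_1^*, …, i_j^*)` in the
index range (`i_ℓ ≤ n_ℓ`, with `i_0 = n_0`) for which
`P^{j-1}_{i_{j-1}}(n_j − i_j) ⋯ P^1_{i_1}(n_2 − i_2) P^0_{n_0}(n_1 − i_1) → 1` as the real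
number `q → ∞`; it is given by `i_0^* = n_0`, `i_ℓ^* = (n_ℓ − i_{ℓ-1}^*)_+`, and for every
other tuple in range the product tends to `0`. -/
theorem unique_tuple_tendsto_one (j : ℕ) (hj : 1 ≤ j) (n : ℕ → ℕ) :
    (∃! i : Fin (j + 1) → ℕ,
      (i 0 = n 0 ∧ ∀ ℓ : Fin (j + 1), i ℓ ≤ n ℓ.val) ∧
        Tendsto (prodP n j i) atTop (nhds 1)) ∧
    (∀ i : Fin (j + 1) → ℕ, i 0 = n 0 → (∀ ℓ : Fin (j + 1), i ℓ ≤ n ℓ.val) →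
      ((∀ ℓ : Fin (j + 1), i ℓ = istar n ℓ.val) →
          Tendsto (prodP n j i) atTop (nhds 1)) ∧
      ((¬ ∀ ℓ : Fin (j + 1), i ℓ = istar n ℓ.val) →
          Tendsto (prodP n j i) atTop (nhds 0))) :=
  unique_tuple_tendsto_one_general j n
end

section
/- Let m ≥ 0 and let n_0 ≤ n_1 ≤ ⋯ ≤ n_{m+1} be a monotone increasing sequence of nonnegative integers. For each prime q, let ℙ_q[β_m = 0] denote |{(A_1,…,A_{m+1}) ∈ C(q) : nullity(A_m) = rank(A_{m+1})}| / |C(q)|, where C(q) is the set of tuples of matrices A_j of size n_{j-1} × n_j over 𝔽_q with A_{j-1}·A_j = 0 for 2 ≤ j ≤ m+1. Then ℙ_q[β_m = 0] → 1 as q → ∞ over primes; that is, the homology in degree m is trivial asymptotically almost surely. -/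
open LinearMap Module Function

namespace ChainAux

variable {F : Type*} [Field F]

def homRangeLEEquiv {V W : Type*} [AddCommGroup V] [Module F V] [AddCommGroup W] [Module F W]
    (K : Submodule F W) :
    {g : V →ₗ[F] W // LinearMap.range g ≤ K} ≃ (V →ₗ[F] K) where
  toFun g := LinearMap.codRestrict K g.1 fun x => g.2 ⟨x, rfl⟩
  invFun h := ⟨K.subtype ∘ₗ h,
    le_trans (LinearMap.range_comp_le_range _ _) (le_of_eq (Submodule.range_subtype K))⟩
  left_inv _ := Subtype.ext (LinearMap.ext fun _ => rfl)
  right_inv _ := LinearMap.ext fun _ => Subtype.ext rfl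

lemma card_hom {W : Type*} [AddCommGroup W] [Module F W] (b : ℕ) :
    Nat.card ((Fin b → F) →ₗ[F] W) = Nat.card W ^ b := by
  rw [← Nat.card_congr ((Pi.basisFun F (Fin b)).constr (M' := W) ℕ).toEquiv,
    Nat.card_fun, Nat.card_eq_fintype_card (α := Fin b), Fintype.card_fin]

lemma nonsurj_mul_le [Fintype F] {W : Type*} [AddCommGroup W] [Module F W] [Module.Finite F W]
    {b : ℕ} (hkb : Module.finrank F W ≤ b) :
    Nat.card {g : (Fin b → F) →ₗ[F] W // ¬ Surjective g} * (Fintype.card F - 1)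
      ≤ Nat.card ((Fin b → F) →ₗ[F] W) := by
  classical
  haveI : Finite W := Module.finite_of_finite F
  haveI : Finite ((Fin b → F) →ₗ[F] W) :=
    Finite.of_equiv _ ((Pi.basisFun F (Fin b)).constr (M' := W) ℕ).toEquiv
  set q := Fintype.card F with hq
  set k := Module.finrank F W with hk
  rcases Nat.eq_zero_or_pos k with hk0 | hkpos
  · haveI : Subsingleton W := Module.finrank_zero_iff.mp hk0
    haveI : IsEmpty {g : (Fin b → F) →ₗ[F] W // ¬ Surjective g} :=
      ⟨fun g => g.2 fun w => ⟨0, Subsingleton.elim _ _⟩⟩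
    simp
  · have hex : ∀ g : {g : (Fin b → F) →ₗ[F] W // ¬ Surjective g},
        ∃ φ : Module.Dual F W, φ ≠ 0 ∧ φ ∘ₗ g.1 = 0 := by
      intro g
      have hlt : LinearMap.range g.1 < ⊤ :=
        lt_top_iff_ne_top.mpr fun h => g.2 (LinearMap.range_eq_top.mp h)
      obtain ⟨φ, hφ0, hφ⟩ := (LinearMap.range g.1).exists_dual_map_eq_bot_of_lt_top hlt inferInstance
      refine ⟨φ, hφ0, LinearMap.range_le_ker_iff.mp ?_⟩
      intro x hx
      have hmem : φ x ∈ (LinearMap.range g.1).map φ := Submodule.mem_map_of_mem hx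
      rw [hφ, Submodule.mem_bot] at hmem
      exact LinearMap.mem_ker.mpr hmem
    choose φf hφ1 hφ2 using hex
    haveI : Finite (Module.Dual F W) := Module.finite_of_finite F
    have hinj : Function.Injective (fun ug : Fˣ × {g : (Fin b → F) →ₗ[F] W // ¬ Surjective g} =>
        (⟨((ug.1 : F) • φf ug.2, ug.2.1),
          smul_ne_zero (Units.ne_zero _) (hφ1 ug.2), by
            rw [LinearMap.smul_comp, hφ2, smul_zero]⟩ :
          {p : Module.Dual F W × ((Fin b → F) →ₗ[F] W) // p.1 ≠ 0 ∧ p.1 ∘ₗ p.2 = 0})) := by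
      rintro ⟨u, g⟩ ⟨u', g'⟩ h
      rw [Subtype.mk.injEq, Prod.mk.injEq] at h
      obtain ⟨h1, h2⟩ := h
      have hgg : g = g' := Subtype.ext h2
      subst hgg
      obtain ⟨x, hx⟩ : ∃ x, φf g x ≠ 0 := by
        by_contra hc
        push_neg at hc
        exact hφ1 g (LinearMap.ext fun x => hc x)
      have h3 := congrArg (fun ψ : Module.Dual F W => ψ x) h1
      simp only [LinearMap.smul_apply, smul_eq_mul] at h3
      exact Prod.ext (Units.ext (mul_right_cancel₀ hx h3)) rfl
    have hcard1 :
        Nat.card (Fˣ × {g : (Fin b → F) →ₗ[F] W // ¬ Surjective g})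
          ≤ Nat.card {p : Module.Dual F W × ((Fin b → F) →ₗ[F] W) // p.1 ≠ 0 ∧ p.1 ∘ₗ p.2 = 0} :=
      Nat.card_le_card_of_injective _ hinj
    have hfiber : ∀ φ : Module.Dual F W,
        Nat.card {g : (Fin b → F) →ₗ[F] W // φ ≠ 0 ∧ φ ∘ₗ g = 0} ≤ (q ^ (k - 1)) ^ b := by
      intro φ
      by_cases hφ : φ = 0
      · haveI : IsEmpty {g : (Fin b → F) →ₗ[F] W // φ ≠ 0 ∧ φ ∘ₗ g = 0} :=
          ⟨fun g => g.2.1 hφ⟩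
        simp
      · have e1 : {g : (Fin b → F) →ₗ[F] W // φ ≠ 0 ∧ φ ∘ₗ g = 0}
            ≃ ((Fin b → F) →ₗ[F] (LinearMap.ker φ)) :=
          (Equiv.subtypeEquivRight fun g => by
            rw [and_iff_right hφ, ← LinearMap.range_le_ker_iff]).trans (homRangeLEEquiv _)
        rw [Nat.card_congr e1, card_hom]
        have hker : Module.finrank F (LinearMap.ker φ) ≤ k - 1 := by
          have hr : Module.finrank F (LinearMap.range φ) ≠ 0 := by
            rw [Ne, Submodule.finrank_eq_zero, LinearMap.range_eq_bot]
            exact hφ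
          have hrn := LinearMap.finrank_range_add_finrank_ker φ
          omega
        letI : Fintype W := Fintype.ofFinite W
        letI : Fintype (LinearMap.ker φ) := Fintype.ofFinite _
        calc Nat.card (LinearMap.ker φ) ^ b
            = (q ^ Module.finrank F (LinearMap.ker φ)) ^ b := by
              rw [Nat.card_eq_fintype_card, card_eq_pow_finrank (K := F)]
          _ ≤ (q ^ (k - 1)) ^ b :=
              Nat.pow_le_pow_left (Nat.pow_le_pow_right Fintype.card_pos hker) b
    have hPairs :
        Nat.card {p : Module.Dual F W × ((Fin b → F) →ₗ[F] W) // p.1 ≠ 0 ∧ p.1 ∘ₗ p.2 = 0}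
          ≤ q ^ k * (q ^ (k - 1)) ^ b := by
      rw [Nat.card_congr (Equiv.subtypeProdEquivSigmaSubtype
        (fun (φ : Module.Dual F W) (g : (Fin b → F) →ₗ[F] W) => φ ≠ 0 ∧ φ ∘ₗ g = 0))]
      letI : Fintype (Module.Dual F W) := Fintype.ofFinite _
      letI : ∀ φ : Module.Dual F W, Fintype {g : (Fin b → F) →ₗ[F] W // φ ≠ 0 ∧ φ ∘ₗ g = 0} :=
        fun φ => Fintype.ofFinite _
      rw [Nat.card_eq_fintype_card, Fintype.card_sigma]
      calc ∑ φ : Module.Dual F W, Fintype.card {g : (Fin b → F) →ₗ[F] W // φ ≠ 0 ∧ φ ∘ₗ g = 0}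
          ≤ ∑ _φ : Module.Dual F W, (q ^ (k - 1)) ^ b :=
            Finset.sum_le_sum fun φ _ => by
              rw [← Nat.card_eq_fintype_card]; exact hfiber φ
        _ = Fintype.card (Module.Dual F W) * (q ^ (k - 1)) ^ b := by
            rw [Finset.sum_const, smul_eq_mul, Finset.card_univ]
        _ = q ^ k * (q ^ (k - 1)) ^ b := by
            rw [card_eq_pow_finrank (K := F) (V := Module.Dual F W),
              Subspace.dual_finrank_eq]
    have hle : Nat.card {g : (Fin b → F) →ₗ[F] W // ¬ Surjective g} * (q - 1)
        ≤ q ^ k * (q ^ (k - 1)) ^ b := by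
      have hprod : Nat.card (Fˣ × {g : (Fin b → F) →ₗ[F] W // ¬ Surjective g})
          = (q - 1) * Nat.card {g : (Fin b → F) →ₗ[F] W // ¬ Surjective g} := by
        rw [Nat.card_prod, Nat.card_units, Nat.card_eq_fintype_card (α := F)]
      calc Nat.card {g : (Fin b → F) →ₗ[F] W // ¬ Surjective g} * (q - 1)
          = Nat.card (Fˣ × {g : (Fin b → F) →ₗ[F] W // ¬ Surjective g}) := by
            rw [hprod, mul_comm]
        _ ≤ _ := le_trans hcard1 hPairs
    letI : Fintype W := Fintype.ofFinite W
    have htot : Nat.card ((Fin b → F) →ₗ[F] W) = (q ^ k) ^ b := by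
      rw [card_hom, Nat.card_eq_fintype_card, card_eq_pow_finrank (K := F)]
    rw [htot]
    refine le_trans hle ?_
    have h1q : 1 ≤ q := Fintype.card_pos
    calc q ^ k * (q ^ (k - 1)) ^ b = q ^ (k + (k - 1) * b) := by
          rw [← pow_mul, ← pow_add]
      _ ≤ q ^ (k * b) := by
          apply Nat.pow_le_pow_right h1q
          have h1 : k - 1 + 1 = k := Nat.succ_pred_eq_of_pos hkpos
          calc k + (k - 1) * b ≤ b + (k - 1) * b := Nat.add_le_add_right hkb _
            _ = (k - 1) * b + b := Nat.add_comm _ _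
            _ = (k - 1 + 1) * b := (Nat.succ_mul _ _).symm
            _ = k * b := by rw [h1]
      _ = (q ^ k) ^ b := pow_mul q k b


lemma mulVecLin_toMatrix' {a b : ℕ} (f : (Fin b → F) →ₗ[F] (Fin a → F)) :
    Matrix.mulVecLin (LinearMap.toMatrix' f) = f := by
  refine LinearMap.ext fun v => ?_
  rw [Matrix.mulVecLin_apply, ← Matrix.toLin'_apply, Matrix.toLin'_toMatrix']

lemma toMatrix'_mulVecLin {a b : ℕ} (C : Matrix (Fin a) (Fin b) F) :
    LinearMap.toMatrix' C.mulVecLin = C := by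
  have h : C.mulVecLin = Matrix.toLin' C := by
    refine LinearMap.ext fun v => ?_
    rw [Matrix.mulVecLin_apply, Matrix.toLin'_apply]
  rw [h, LinearMap.toMatrix'_toLin']

lemma mul_eq_zero_iff_range_le_ker {a b c : ℕ} (D : Matrix (Fin a) (Fin b) F)
    (C : Matrix (Fin b) (Fin c) F) :
    D * C = 0 ↔ LinearMap.range C.mulVecLin ≤ LinearMap.ker D.mulVecLin := by
  rw [LinearMap.range_le_ker_iff, ← Matrix.mulVecLin_mul]
  constructor
  · intro h; rw [h, Matrix.mulVecLin_zero]
  · intro h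
    have h2 := congrArg LinearMap.toMatrix' h
    rwa [toMatrix'_mulVecLin, map_zero] at h2

/-- Matrices whose column space is contained in `K` correspond to linear maps into `K`. -/
def matrixHomEquiv {a b : ℕ} (K : Submodule F (Fin a → F)) :
    {C : Matrix (Fin a) (Fin b) F // LinearMap.range C.mulVecLin ≤ K} ≃ ((Fin b → F) →ₗ[F] K) where
  toFun C := LinearMap.codRestrict K C.1.mulVecLin fun x => C.2 ⟨x, rfl⟩
  invFun h := ⟨LinearMap.toMatrix' (K.subtype ∘ₗ h), by
    rw [mulVecLin_toMatrix']
    exact le_trans (LinearMap.range_comp_le_range _ _) (le_of_eq (Submodule.range_subtype K))⟩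
  left_inv C := Subtype.ext
    (by simp only [LinearMap.subtype_comp_codRestrict, toMatrix'_mulVecLin])
  right_inv h := by
    refine LinearMap.ext fun v => Subtype.ext ?_
    simp only [LinearMap.codRestrict_apply, mulVecLin_toMatrix', LinearMap.comp_apply,
      Submodule.coe_subtype]

lemma surj_iff_rank {a b : ℕ} (K : Submodule F (Fin a → F))
    (x : {C : Matrix (Fin a) (Fin b) F // LinearMap.range C.mulVecLin ≤ K}) :
    Module.finrank F K = Matrix.rank x.1 ↔ Surjective (matrixHomEquiv K x) := by
  have hrange : Surjective (matrixHomEquiv K x) ↔ K ≤ LinearMap.range x.1.mulVecLin := by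
    constructor
    · intro h y hy
      obtain ⟨v, hv⟩ := h ⟨y, hy⟩
      exact ⟨v, congrArg Subtype.val hv⟩
    · intro h y
      obtain ⟨v, hv⟩ := h y.2
      exact ⟨v, Subtype.ext hv⟩
  rw [hrange]
  constructor
  · intro h
    have heq : LinearMap.range x.1.mulVecLin = K :=
      Submodule.eq_of_le_of_finrank_eq x.2 h.symm
    exact le_of_eq heq.symm
  · intro h
    have heq : LinearMap.range x.1.mulVecLin = K := le_antisymm x.2 h
    show Module.finrank F K = Module.finrank F (LinearMap.range x.1.mulVecLin)
    rw [heq]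

lemma fiber_bound [Fintype F] {a b : ℕ} (K : Submodule F (Fin a → F))
    (hK : Module.finrank F K ≤ b) (P : Prop) :
    (1 - 1 / ((Fintype.card F : ℝ) - 1)) *
        (Nat.card {C : Matrix (Fin a) (Fin b) F // P ∧ LinearMap.range C.mulVecLin ≤ K} : ℝ)
      ≤ (Nat.card {C : Matrix (Fin a) (Fin b) F //
          (P ∧ LinearMap.range C.mulVecLin ≤ K) ∧ Module.finrank F K = C.rank} : ℝ) := by
  classical
  by_cases hP : P
  · have eT : {C : Matrix (Fin a) (Fin b) F // P ∧ LinearMap.range C.mulVecLin ≤ K}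
        ≃ {C : Matrix (Fin a) (Fin b) F // LinearMap.range C.mulVecLin ≤ K} :=
      Equiv.subtypeEquivRight fun C => and_iff_right hP
    have eG : {C : Matrix (Fin a) (Fin b) F //
          (P ∧ LinearMap.range C.mulVecLin ≤ K) ∧ Module.finrank F K = C.rank}
        ≃ {h : (Fin b → F) →ₗ[F] K // Surjective h} := by
      have eMid : {x : {C : Matrix (Fin a) (Fin b) F // P ∧ LinearMap.range C.mulVecLin ≤ K} //
            Module.finrank F K = x.1.rank}
          ≃ {y : {C : Matrix (Fin a) (Fin b) F // LinearMap.range C.mulVecLin ≤ K} //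
            Module.finrank F K = y.1.rank} :=
        Equiv.subtypeEquiv (Equiv.subtypeEquivRight fun C => and_iff_right hP)
          fun x => Iff.rfl
      have eSur : {y : {C : Matrix (Fin a) (Fin b) F // LinearMap.range C.mulVecLin ≤ K} //
            Module.finrank F K = y.1.rank}
          ≃ {h : (Fin b → F) →ₗ[F] K // Surjective h} :=
        Equiv.subtypeEquiv (matrixHomEquiv K) fun x => surj_iff_rank K x
      exact (Equiv.subtypeSubtypeEquivSubtypeInter _ _).symm.trans (eMid.trans eSur)
    rw [Nat.card_congr eT, Nat.card_congr eG,
      Nat.card_congr (matrixHomEquiv (b := b) K)]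
    haveI : Finite ((Fin b → F) →ₗ[F] K) := Finite.of_equiv _ (matrixHomEquiv (b := b) K)
    letI : Fintype ((Fin b → F) →ₗ[F] K) := Fintype.ofFinite _
    have hns := nonsurj_mul_le (F := F) (W := K) (b := b) hK
    have hsplit : Nat.card {h : (Fin b → F) →ₗ[F] K // Surjective h}
        + Nat.card {h : (Fin b → F) →ₗ[F] K // ¬ Surjective h}
        = Nat.card ((Fin b → F) →ₗ[F] K) := by
      rw [Nat.card_eq_fintype_card, Nat.card_eq_fintype_card, Nat.card_eq_fintype_card,
        Fintype.card_subtype_compl]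
      have := Fintype.card_subtype_le (fun h : (Fin b → F) →ₗ[F] K => Surjective h)
      omega
    have hq2 : 2 ≤ Fintype.card F := Fintype.one_lt_card
    have hqR : (1 : ℝ) < (Fintype.card F : ℝ) := by exact_mod_cast hq2
    have hpos : (0 : ℝ) < (Fintype.card F : ℝ) - 1 := by linarith
    have hNS : (Nat.card {h : (Fin b → F) →ₗ[F] K // ¬ Surjective h} : ℝ)
        * ((Fintype.card F : ℝ) - 1) ≤ (Nat.card ((Fin b → F) →ₗ[F] K) : ℝ) := by
      have h' := Nat.cast_le (α := ℝ).mpr hns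
      rwa [Nat.cast_mul, Nat.cast_sub (by omega), Nat.cast_one] at h'
    have hN : (Nat.card {h : (Fin b → F) →ₗ[F] K // ¬ Surjective h} : ℝ)
        ≤ (Nat.card ((Fin b → F) →ₗ[F] K) : ℝ) / ((Fintype.card F : ℝ) - 1) :=
      (le_div_iff₀ hpos).mpr hNS
    have hS : (Nat.card {h : (Fin b → F) →ₗ[F] K // Surjective h} : ℝ)
        + (Nat.card {h : (Fin b → F) →ₗ[F] K // ¬ Surjective h} : ℝ)
        = (Nat.card ((Fin b → F) →ₗ[F] K) : ℝ) := by exact_mod_cast hsplit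
    have expand : (1 - 1 / ((Fintype.card F : ℝ) - 1)) * (Nat.card ((Fin b → F) →ₗ[F] K) : ℝ)
        = (Nat.card ((Fin b → F) →ₗ[F] K) : ℝ)
          - (Nat.card ((Fin b → F) →ₗ[F] K) : ℝ) / ((Fintype.card F : ℝ) - 1) := by
      ring
    linarith
  · haveI h1 : IsEmpty {C : Matrix (Fin a) (Fin b) F // P ∧ LinearMap.range C.mulVecLin ≤ K} :=
      ⟨fun C => hP C.2.1⟩
    haveI h2 : IsEmpty {C : Matrix (Fin a) (Fin b) F //
        (P ∧ LinearMap.range C.mulVecLin ≤ K) ∧ Module.finrank F K = C.rank} :=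
      ⟨fun C => hP C.2.1.1⟩
    simp


lemma sigma_bound {ι : Type*} [Finite ι] (tT tG : ι → Type*) [∀ i, Finite (tT i)]
    [∀ i, Finite (tG i)] (c : ℝ) (h : ∀ i, c * (Nat.card (tT i) : ℝ) ≤ (Nat.card (tG i) : ℝ)) :
    c * (Nat.card (Σ i, tT i) : ℝ) ≤ (Nat.card (Σ i, tG i) : ℝ) := by
  classical
  letI := Fintype.ofFinite ι
  letI : ∀ i, Fintype (tT i) := fun i => Fintype.ofFinite _
  letI : ∀ i, Fintype (tG i) := fun i => Fintype.ofFinite _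
  rw [Nat.card_eq_fintype_card, Nat.card_eq_fintype_card, Fintype.card_sigma,
    Fintype.card_sigma]
  push_cast
  rw [Finset.mul_sum]
  refine Finset.sum_le_sum fun i _ => ?_
  have hi := h i
  rwa [Nat.card_eq_fintype_card, Nat.card_eq_fintype_card] at hi

/-- Splitting off the last entry of a tuple, for subtypes. -/
def snocSubtypeEquiv {N : ℕ} {α : Fin (N + 1) → Type*} (Φ : (∀ j, α j) → Prop) :
    {A : ∀ j, α j // Φ A} ≃
      Σ B : ∀ j : Fin N, α j.castSucc, {C : α (Fin.last N) // Φ (Fin.snoc B C)} :=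
  ((Equiv.subtypeEquiv (Fin.snocEquiv α).symm
      (q := fun x => Φ (Fin.snoc x.2 x.1))
      fun A => by
        have h := Equiv.apply_symm_apply (Fin.snocEquiv α) A
        exact iff_of_eq (congrArg Φ h).symm).trans
    ((Equiv.subtypeEquiv (Equiv.prodComm _ _)
        (q := fun y => Φ (Fin.snoc y.1 y.2)) fun x => Iff.rfl).trans
      (Equiv.subtypeProdEquivSigmaSubtype fun (B : ∀ j : Fin N, α j.castSucc)
        (C : α (Fin.last N)) => Φ (Fin.snoc B C))))

end ChainAux

set_option maxHeartbeats 1000000 in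
/-- Corollary 4.3: if the dimensions `n_0 ≤ n_1 ≤ ⋯ ≤ n_{m+1}` are monotone
increasing, then for a uniform random chain complex over `𝔽_q` — tuples `(A_1, …, A_{m+1})`
of matrices, `A_j` of size `n_{j-1} × n_j`, with `A_{j-1}·A_j = 0` for `2 ≤ j ≤ m+1` — the
probability that `β_m = 0`, i.e. that `nullity(A_m) = rank(A_{m+1})`, tends to `1` as the
prime `q → ∞`. Here `A ⟨j⟩` denotes the paper's `A_{j+1}`, and `nullity(A_0) = n_0` when
`m = 0`. -/
theorem homology_trivial_for_monotone_dims (m : ℕ) (n : ℕ → ℕ)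
    (hmono : ∀ ℓ : ℕ, ℓ ≤ m → n ℓ ≤ n (ℓ + 1)) :
    ∀ ε : ℝ, 0 < ε → ∃ Q : ℕ, ∀ q : ℕ, Q ≤ q → q.Prime →
      1 - ε <
        (Nat.card {A : (j : Fin (m + 1)) →
              Matrix (Fin (n j.val)) (Fin (n (j.val + 1))) (ZMod q) //
            (∀ (i : ℕ) (h : i + 1 < m + 1), A ⟨i, by omega⟩ * A ⟨i + 1, h⟩ = 0) ∧
            (if hm : m = 0 then n 0 else
                Module.finrank (ZMod q)
                  (LinearMap.ker (Matrix.mulVecLin (A ⟨m - 1, by omega⟩))))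
              = (A ⟨m, by omega⟩).rank} : ℝ) /
        (Nat.card {A : (j : Fin (m + 1)) →
              Matrix (Fin (n j.val)) (Fin (n (j.val + 1))) (ZMod q) //
            ∀ (i : ℕ) (h : i + 1 < m + 1), A ⟨i, by omega⟩ * A ⟨i + 1, h⟩ = 0} : ℝ) := by
  intro ε hε
  refine ⟨⌈1/ε⌉₊ + 2, fun q hQq hq => ?_⟩
  haveI : Fact q.Prime := ⟨hq⟩
  have hcardF : Fintype.card (ZMod q) = q := ZMod.card q
  have hq2 : 2 ≤ Fintype.card (ZMod q) := Fintype.one_lt_card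
  have hδ : 1 - ε < 1 - 1 / ((Fintype.card (ZMod q) : ℝ) - 1) := by
    have h1 : (1:ℝ)/ε ≤ (⌈1/ε⌉₊ : ℝ) := Nat.le_ceil _
    have hqR : ((⌈1/ε⌉₊ + 2 : ℕ) : ℝ) ≤ (q : ℝ) := Nat.cast_le.mpr hQq
    push_cast at hqR
    rw [hcardF]
    have hεpos : (0:ℝ) < 1/ε := by positivity
    have key : 1 / ((q:ℝ) - 1) < ε := by
      rw [div_lt_iff₀ (by linarith)]
      have h2 : 1/ε + 1 ≤ (q:ℝ) - 1 := by linarith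
      have h3 : ε * (1/ε + 1) ≤ ε * ((q:ℝ)-1) := mul_le_mul_of_nonneg_left h2 hε.le
      have h4 : ε * (1/ε + 1) = 1 + ε := by field_simp
      linarith
    linarith
  obtain _ | m' := m
  · -- case m = 0
    have hfr : Module.finrank (ZMod q) (⊤ : Submodule (ZMod q) (Fin (n 0) → ZMod q)) = n 0 := by
      rw [finrank_top, Module.finrank_fin_fun]
    haveI hne : Nonempty {A : (j : Fin (0 + 1)) →
            Matrix (Fin (n j.val)) (Fin (n (j.val + 1))) (ZMod q) //
          ∀ (i : ℕ) (h : i + 1 < 0 + 1), A ⟨i, by omega⟩ * A ⟨i + 1, h⟩ = 0} :=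
      ⟨⟨fun _ => 0, fun i h => absurd h (by omega)⟩⟩
    have hDpos : (0:ℝ) < (Nat.card {A : (j : Fin (0 + 1)) →
            Matrix (Fin (n j.val)) (Fin (n (j.val + 1))) (ZMod q) //
          ∀ (i : ℕ) (h : i + 1 < 0 + 1), A ⟨i, by omega⟩ * A ⟨i + 1, h⟩ = 0} : ℝ) := by
      exact_mod_cast Nat.card_pos
    have e1 := ChainAux.snocSubtypeEquiv (N := 0)
      (α := fun j : Fin (0 + 1) => Matrix (Fin (n j.val)) (Fin (n (j.val + 1))) (ZMod q))
      (fun A => ∀ (i : ℕ) (h : i + 1 < 0 + 1), A ⟨i, by omega⟩ * A ⟨i + 1, h⟩ = 0)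
    have e2 := ChainAux.snocSubtypeEquiv (N := 0)
      (α := fun j : Fin (0 + 1) => Matrix (Fin (n j.val)) (Fin (n (j.val + 1))) (ZMod q))
      (fun A => (∀ (i : ℕ) (h : i + 1 < 0 + 1), A ⟨i, by omega⟩ * A ⟨i + 1, h⟩ = 0) ∧
        (if hm : (0:ℕ) = 0 then n 0 else
            Module.finrank (ZMod q)
              (LinearMap.ker (Matrix.mulVecLin (A ⟨0 - 1, by omega⟩))))
          = (A ⟨0, by omega⟩).rank)
    have hmain : (1 - 1 / ((Fintype.card (ZMod q) : ℝ) - 1)) *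
        (Nat.card {A : (j : Fin (0 + 1)) →
            Matrix (Fin (n j.val)) (Fin (n (j.val + 1))) (ZMod q) //
          ∀ (i : ℕ) (h : i + 1 < 0 + 1), A ⟨i, by omega⟩ * A ⟨i + 1, h⟩ = 0} : ℝ)
        ≤ (Nat.card {A : (j : Fin (0 + 1)) →
            Matrix (Fin (n j.val)) (Fin (n (j.val + 1))) (ZMod q) //
          (∀ (i : ℕ) (h : i + 1 < 0 + 1), A ⟨i, by omega⟩ * A ⟨i + 1, h⟩ = 0) ∧
            (if hm : (0:ℕ) = 0 then n 0 else
                Module.finrank (ZMod q)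
                  (LinearMap.ker (Matrix.mulVecLin (A ⟨0 - 1, by omega⟩))))
              = (A ⟨0, by omega⟩).rank} : ℝ) := by
      rw [Nat.card_congr e1, Nat.card_congr e2]
      apply ChainAux.sigma_bound
      intro B
      refine le_trans (le_of_eq ?_) (le_trans (ChainAux.fiber_bound (F := ZMod q)
          (a := n 0) (b := n 1) (⊤ : Submodule (ZMod q) (Fin (n 0) → ZMod q))
          (by rw [hfr]; exact hmono 0 (le_refl 0)) True) (le_of_eq ?_))
      · have etriv : ∀ C : Matrix (Fin (n 0)) (Fin (n 1)) (ZMod q),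
            (∀ (i : ℕ) (h : i + 1 < 0 + 1),
              Fin.snoc (α := fun j : Fin (0 + 1) =>
                  Matrix (Fin (n j.val)) (Fin (n (j.val + 1))) (ZMod q)) B C ⟨i, by omega⟩ *
                Fin.snoc (α := fun j : Fin (0 + 1) =>
                  Matrix (Fin (n j.val)) (Fin (n (j.val + 1))) (ZMod q)) B C ⟨i + 1, h⟩ = 0) ↔
              (True ∧ LinearMap.range C.mulVecLin ≤ ⊤) :=
          fun C => iff_of_true (fun i h => absurd h (by omega)) ⟨trivial, le_top⟩
        congr 1
        exact_mod_cast Nat.card_congr (Equiv.subtypeEquivRight etriv)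
      · have egood : ∀ C : Matrix (Fin (n 0)) (Fin (n 1)) (ZMod q),
            ((True ∧ LinearMap.range C.mulVecLin ≤ ⊤) ∧
                Module.finrank (ZMod q)
                  (⊤ : Submodule (ZMod q) (Fin (n 0) → ZMod q)) = C.rank) ↔
              ((∀ (i : ℕ) (h : i + 1 < 0 + 1),
                  Fin.snoc (α := fun j : Fin (0 + 1) =>
                      Matrix (Fin (n j.val)) (Fin (n (j.val + 1))) (ZMod q)) B C ⟨i, by omega⟩ *
                    Fin.snoc (α := fun j : Fin (0 + 1) =>
                      Matrix (Fin (n j.val)) (Fin (n (j.val + 1))) (ZMod q)) B C ⟨i + 1, h⟩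
                    = 0) ∧
                (if hm : (0:ℕ) = 0 then n 0 else
                    Module.finrank (ZMod q)
                      (LinearMap.ker
                        (Matrix.mulVecLin (Fin.snoc (α := fun j : Fin (0 + 1) =>
                          Matrix (Fin (n j.val)) (Fin (n (j.val + 1))) (ZMod q)) B C
                            ⟨0 - 1, by omega⟩))))
                  = (Fin.snoc (α := fun j : Fin (0 + 1) =>
                      Matrix (Fin (n j.val)) (Fin (n (j.val + 1))) (ZMod q)) B C
                        ⟨0, by omega⟩).rank) := by
          intro C
          constructor
          · rintro ⟨h1, h2⟩
            rw [hfr] at h2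
            refine ⟨fun i h => absurd h (by omega), ?_⟩
            show (n 0 : ℕ) = C.rank
            exact h2
          · rintro ⟨h1, h2⟩
            have h2' : (n 0 : ℕ) = C.rank := h2
            refine ⟨⟨trivial, le_top⟩, ?_⟩
            rw [hfr]
            exact h2'
        exact_mod_cast Nat.card_congr (Equiv.subtypeEquivRight fun C => egood C)
    exact lt_of_lt_of_le hδ ((le_div_iff₀ hDpos).mpr hmain)
  · -- case m = m' + 1
    have chain_iff : ∀ A : (j : Fin (m' + 1 + 1)) →
          Matrix (Fin (n j.val)) (Fin (n (j.val + 1))) (ZMod q),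
        (∀ (i : ℕ) (h : i + 1 < m' + 1 + 1), A ⟨i, by omega⟩ * A ⟨i + 1, h⟩ = 0) ↔
          ((∀ (i : ℕ) (h : i + 1 < m' + 1),
              HMul.hMul (α := Matrix (Fin (n i)) (Fin (n (i + 1))) (ZMod q))
                (β := Matrix (Fin (n (i + 1))) (Fin (n (i + 2))) (ZMod q))
                (γ := Matrix (Fin (n i)) (Fin (n (i + 2))) (ZMod q))
                (A (Fin.castSucc ⟨i, by omega⟩)) (A (Fin.castSucc ⟨i + 1, h⟩)) = 0) ∧
            LinearMap.range (A (Fin.last (m' + 1)) :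
                Matrix (Fin (n (m' + 1))) (Fin (n (m' + 1 + 1))) (ZMod q)).mulVecLin
              ≤ LinearMap.ker (A (Fin.castSucc (Fin.last m')) :
                Matrix (Fin (n m')) (Fin (n (m' + 1))) (ZMod q)).mulVecLin) := by
      intro A
      constructor
      · intro hA
        refine ⟨fun i hi => hA i (by omega), ?_⟩
        exact (ChainAux.mul_eq_zero_iff_range_le_ker _ _).mp (hA m' (by omega))
      · rintro ⟨h1, h2⟩ i hi
        by_cases him : i + 1 < m' + 1
        · exact h1 i him
        · have hieq : i = m' := by omega
          subst hieq
          exact (ChainAux.mul_eq_zero_iff_range_le_ker _ _).mpr h2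
    have good_iff : ∀ A : (j : Fin (m' + 1 + 1)) →
          Matrix (Fin (n j.val)) (Fin (n (j.val + 1))) (ZMod q),
        ((if hm : m' + 1 = 0 then n 0 else
            Module.finrank (ZMod q)
              (LinearMap.ker (Matrix.mulVecLin (A ⟨m' + 1 - 1, by omega⟩))))
            = (A ⟨m' + 1, by omega⟩).rank) ↔
          (Module.finrank (ZMod q)
              (LinearMap.ker (A (Fin.castSucc (Fin.last m')) :
                Matrix (Fin (n m')) (Fin (n (m' + 1))) (ZMod q)).mulVecLin)
            = (A (Fin.last (m' + 1)) :
                Matrix (Fin (n (m' + 1))) (Fin (n (m' + 1 + 1))) (ZMod q)).rank) :=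
      fun A => Iff.rfl
    haveI hne : Nonempty {A : (j : Fin (m' + 1 + 1)) →
            Matrix (Fin (n j.val)) (Fin (n (j.val + 1))) (ZMod q) //
          ∀ (i : ℕ) (h : i + 1 < m' + 1 + 1), A ⟨i, by omega⟩ * A ⟨i + 1, h⟩ = 0} :=
      ⟨⟨fun _ => 0, fun i h => by rw [Matrix.zero_mul]⟩⟩
    have hDpos : (0:ℝ) < (Nat.card {A : (j : Fin (m' + 1 + 1)) →
            Matrix (Fin (n j.val)) (Fin (n (j.val + 1))) (ZMod q) //
          ∀ (i : ℕ) (h : i + 1 < m' + 1 + 1), A ⟨i, by omega⟩ * A ⟨i + 1, h⟩ = 0} : ℝ) := by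
      exact_mod_cast Nat.card_pos
    have e1 := ChainAux.snocSubtypeEquiv (N := m' + 1)
      (α := fun j : Fin (m' + 1 + 1) => Matrix (Fin (n j.val)) (Fin (n (j.val + 1))) (ZMod q))
      (fun A => ∀ (i : ℕ) (h : i + 1 < m' + 1 + 1), A ⟨i, by omega⟩ * A ⟨i + 1, h⟩ = 0)
    have e2 := ChainAux.snocSubtypeEquiv (N := m' + 1)
      (α := fun j : Fin (m' + 1 + 1) => Matrix (Fin (n j.val)) (Fin (n (j.val + 1))) (ZMod q))
      (fun A => (∀ (i : ℕ) (h : i + 1 < m' + 1 + 1), A ⟨i, by omega⟩ * A ⟨i + 1, h⟩ = 0) ∧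
        (if hm : m' + 1 = 0 then n 0 else
            Module.finrank (ZMod q)
              (LinearMap.ker (Matrix.mulVecLin (A ⟨m' + 1 - 1, by omega⟩))))
          = (A ⟨m' + 1, by omega⟩).rank)
    have hmain : (1 - 1 / ((Fintype.card (ZMod q) : ℝ) - 1)) *
        (Nat.card {A : (j : Fin (m' + 1 + 1)) →
            Matrix (Fin (n j.val)) (Fin (n (j.val + 1))) (ZMod q) //
          ∀ (i : ℕ) (h : i + 1 < m' + 1 + 1), A ⟨i, by omega⟩ * A ⟨i + 1, h⟩ = 0} : ℝ)
        ≤ (Nat.card {A : (j : Fin (m' + 1 + 1)) →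
            Matrix (Fin (n j.val)) (Fin (n (j.val + 1))) (ZMod q) //
          (∀ (i : ℕ) (h : i + 1 < m' + 1 + 1), A ⟨i, by omega⟩ * A ⟨i + 1, h⟩ = 0) ∧
            (if hm : m' + 1 = 0 then n 0 else
                Module.finrank (ZMod q)
                  (LinearMap.ker (Matrix.mulVecLin (A ⟨m' + 1 - 1, by omega⟩))))
              = (A ⟨m' + 1, by omega⟩).rank} : ℝ) := by
      rw [Nat.card_congr e1, Nat.card_congr e2]
      apply ChainAux.sigma_bound
      intro B
      refine le_trans (le_of_eq ?_) (le_trans (ChainAux.fiber_bound (F := ZMod q)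
          (a := n (m' + 1)) (b := n (m' + 1 + 1))
          (LinearMap.ker (B (Fin.last m')).mulVecLin) ?_
          (∀ (i : ℕ) (h : i + 1 < m' + 1),
            HMul.hMul (α := Matrix (Fin (n i)) (Fin (n (i + 1))) (ZMod q))
              (β := Matrix (Fin (n (i + 1))) (Fin (n (i + 2))) (ZMod q))
              (γ := Matrix (Fin (n i)) (Fin (n (i + 2))) (ZMod q))
              (B ⟨i, by omega⟩) (B ⟨i + 1, h⟩) = 0))
          (le_of_eq ?_))
      · congr 1
        exact_mod_cast Nat.card_congr (Equiv.subtypeEquivRight fun C =>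
          (chain_iff (Fin.snoc B C)).trans (by
            simp only [Fin.snoc_castSucc, Fin.snoc_last]
            try exact Iff.rfl))
      · calc Module.finrank (ZMod q) (LinearMap.ker (B (Fin.last m')).mulVecLin)
            ≤ Module.finrank (ZMod q) (Fin (n (m' + 1)) → ZMod q) := Submodule.finrank_le _
          _ = n (m' + 1) := Module.finrank_fin_fun _
          _ ≤ n (m' + 1 + 1) := hmono (m' + 1) le_rfl
      · have egood2 : ∀ C : Matrix (Fin (n (m' + 1))) (Fin (n (m' + 1 + 1))) (ZMod q),
            ((∀ (i : ℕ) (h : i + 1 < m' + 1 + 1),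
                Fin.snoc (α := fun j : Fin (m' + 1 + 1) =>
                    Matrix (Fin (n j.val)) (Fin (n (j.val + 1))) (ZMod q)) B C ⟨i, by omega⟩ *
                  Fin.snoc (α := fun j : Fin (m' + 1 + 1) =>
                    Matrix (Fin (n j.val)) (Fin (n (j.val + 1))) (ZMod q)) B C ⟨i + 1, h⟩
                  = 0) ∧
              (if hm : m' + 1 = 0 then n 0 else
                  Module.finrank (ZMod q)
                    (LinearMap.ker (Matrix.mulVecLin
                      (Fin.snoc (α := fun j : Fin (m' + 1 + 1) =>
                        Matrix (Fin (n j.val)) (Fin (n (j.val + 1))) (ZMod q)) B C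
                          ⟨m' + 1 - 1, by omega⟩))))
                = (Fin.snoc (α := fun j : Fin (m' + 1 + 1) =>
                    Matrix (Fin (n j.val)) (Fin (n (j.val + 1))) (ZMod q)) B C
                      ⟨m' + 1, by omega⟩).rank) ↔
            (((∀ (i : ℕ) (h : i + 1 < m' + 1),
                HMul.hMul (α := Matrix (Fin (n i)) (Fin (n (i + 1))) (ZMod q))
                  (β := Matrix (Fin (n (i + 1))) (Fin (n (i + 2))) (ZMod q))
                  (γ := Matrix (Fin (n i)) (Fin (n (i + 2))) (ZMod q))
                  (B ⟨i, by omega⟩) (B ⟨i + 1, h⟩) = 0) ∧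
              LinearMap.range C.mulVecLin
                ≤ LinearMap.ker (B (Fin.last m')).mulVecLin) ∧
              Module.finrank (ZMod q)
                (LinearMap.ker (B (Fin.last m')).mulVecLin) = C.rank) := by
          intro C
          have hBC : Fin.snoc (α := fun j : Fin (m' + 1 + 1) =>
              Matrix (Fin (n j.val)) (Fin (n (j.val + 1))) (ZMod q)) B C
                (Fin.castSucc (Fin.last m')) = B (Fin.last m') := by simp
          refine (and_congr (chain_iff (Fin.snoc B C)) (good_iff (Fin.snoc B C))).trans ?_
          simp only [Fin.snoc_castSucc, Fin.snoc_last]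
          exact and_congr_right fun _ => iff_of_eq
            (congrArg (fun M => (Module.finrank (ZMod q)
              (LinearMap.ker (Matrix.mulVecLin M)) = C.rank)) hBC)
        exact_mod_cast Nat.card_congr (Equiv.subtypeEquivRight fun C => (egood2 C).symm)
    exact lt_of_lt_of_le hδ ((le_div_iff₀ hDpos).mpr hmain)
end
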